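/- Let (A, R) be a cobraided bialgebra over a commutative ring k, V an A-comodule in the classical sense with structure map ρ : V → A ⊗ V (written ρ(v) = Σ v_A ⊗ v_V), and α_V : V → V a morphism of A-comodules (i.e., (Id_A ⊗ α_V)∘ρ = ρ∘α_V). Then the map B_α : V ⊗ V → V ⊗ V defined by B_α(v ⊗ w) = Σ R(w_A ⊗ v_A) α_V(w_V) ⊗ α_V(v_V) is a solution of the Hom-Yang-Baxter equation for (V, α_V). -/

import Mathlib

open TensorProduct

/-- The axioms of a Hom-bialgebra (no unit or counit assumed):
multiplicativity and comultiplicativity of the twisting map `α`,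
Hom-associativity, Hom-coassociativity, and the compatibility
`Δ(xy) = Σ x₁y₁ ⊗ x₂y₂` (stated via arbitrary finite representations of the
Sweedler sums). -/
def IsHomBialgebra (k : Type*) {A : Type*} [CommRing k] [AddCommGroup A] [Module k A]
    (μ : A →ₗ[k] A →ₗ[k] A) (Δ : A →ₗ[k] A ⊗[k] A) (α : A →ₗ[k] A) : Prop :=
  (∀ x y : A, α (μ x y) = μ (α x) (α y)) ∧
  (∀ x y z : A, μ (α x) (μ y z) = μ (μ x y) (α z)) ∧
  (TensorProduct.map α α ∘ₗ Δ = Δ ∘ₗ α) ∧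
  (TensorProduct.map α Δ ∘ₗ Δ =
    (TensorProduct.assoc k A A A).toLinearMap ∘ₗ TensorProduct.map Δ α ∘ₗ Δ) ∧
  (∀ (x y : A) (m n : ℕ) (x1 x2 : Fin m → A) (y1 y2 : Fin n → A),
    Δ x = ∑ i, x1 i ⊗ₜ[k] x2 i → Δ y = ∑ j, y1 j ⊗ₜ[k] y2 j →
    Δ (μ x y) = ∑ i, ∑ j, μ (x1 i) (y1 j) ⊗ₜ[k] μ (x2 i) (y2 j))

/-- A cobraided Hom-bialgebra: a Hom-bialgebra together with a bilinear form `R`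
satisfying the three axioms (i), (ii), (iii), stated via arbitrary finite
representations of the Sweedler sums. -/
def IsCobraidedHomBialgebra (k : Type*) {A : Type*} [CommRing k] [AddCommGroup A] [Module k A]
    (μ : A →ₗ[k] A →ₗ[k] A) (Δ : A →ₗ[k] A ⊗[k] A) (α : A →ₗ[k] A)
    (R : A →ₗ[k] A →ₗ[k] k) : Prop :=
  IsHomBialgebra k μ Δ α ∧
  (∀ (x y z : A) (n : ℕ) (z1 z2 : Fin n → A), Δ z = ∑ i, z1 i ⊗ₜ[k] z2 i →
    R (μ x y) (α z) = ∑ i, R (α x) (z1 i) * R (α y) (z2 i)) ∧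
  (∀ (x y z : A) (n : ℕ) (x1 x2 : Fin n → A), Δ x = ∑ i, x1 i ⊗ₜ[k] x2 i →
    R (α x) (μ y z) = ∑ i, R (x1 i) (α z) * R (x2 i) (α y)) ∧
  (∀ (x y : A) (m n : ℕ) (x1 x2 : Fin m → A) (y1 y2 : Fin n → A),
    Δ x = ∑ i, x1 i ⊗ₜ[k] x2 i → Δ y = ∑ j, y1 j ⊗ₜ[k] y2 j →
    ∑ i, ∑ j, R (x2 i) (y2 j) • μ (y1 j) (x1 i)
      = ∑ i, ∑ j, R (x1 i) (y1 j) • μ (x2 i) (y2 j))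

/-- A (classical) cobraided bialgebra, without unit, counit, or invertibility of `R`. -/
def IsCobraidedBialgebra (k : Type*) {A : Type*} [CommRing k] [AddCommGroup A] [Module k A]
    (μ : A →ₗ[k] A →ₗ[k] A) (Δ : A →ₗ[k] A ⊗[k] A) (R : A →ₗ[k] A →ₗ[k] k) : Prop :=
  (∀ x y z : A, μ (μ x y) z = μ x (μ y z)) ∧
  (TensorProduct.map LinearMap.id Δ ∘ₗ Δ =
    (TensorProduct.assoc k A A A).toLinearMap ∘ₗ TensorProduct.map Δ LinearMap.id ∘ₗ Δ) ∧
  (∀ (x y : A) (m n : ℕ) (x1 x2 : Fin m → A) (y1 y2 : Fin n → A),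
    Δ x = ∑ i, x1 i ⊗ₜ[k] x2 i → Δ y = ∑ j, y1 j ⊗ₜ[k] y2 j →
    Δ (μ x y) = ∑ i, ∑ j, μ (x1 i) (y1 j) ⊗ₜ[k] μ (x2 i) (y2 j)) ∧
  (∀ (x y z : A) (n : ℕ) (z1 z2 : Fin n → A), Δ z = ∑ i, z1 i ⊗ₜ[k] z2 i →
    R (μ x y) z = ∑ i, R x (z1 i) * R y (z2 i)) ∧
  (∀ (x y z : A) (n : ℕ) (x1 x2 : Fin n → A), Δ x = ∑ i, x1 i ⊗ₜ[k] x2 i →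
    R x (μ y z) = ∑ i, R (x1 i) z * R (x2 i) y) ∧
  (∀ (x y : A) (m n : ℕ) (x1 x2 : Fin m → A) (y1 y2 : Fin n → A),
    Δ x = ∑ i, x1 i ⊗ₜ[k] x2 i → Δ y = ∑ j, y1 j ⊗ₜ[k] y2 j →
    ∑ i, ∑ j, R (x2 i) (y2 j) • μ (y1 j) (x1 i)
      = ∑ i, ∑ j, R (x1 i) (y1 j) • μ (x2 i) (y2 j))

/-- A braided (quasi-triangular) Hom-bialgebra, with `R ∈ A ⊗ A`. -/
def IsBraidedHomBialgebra (k : Type*) {A : Type*} [CommRing k] [AddCommGroup A] [Module k A]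
    (μ : A →ₗ[k] A →ₗ[k] A) (Δ : A →ₗ[k] A ⊗[k] A) (α : A →ₗ[k] A)
    (Rel : A ⊗[k] A) : Prop :=
  IsHomBialgebra k μ Δ α ∧
  (∀ (n : ℕ) (s t : Fin n → A), Rel = ∑ i, s i ⊗ₜ[k] t i →
    TensorProduct.map Δ α Rel = ∑ i, ∑ j, (α (s i) ⊗ₜ[k] α (s j)) ⊗ₜ[k] μ (t i) (t j)) ∧
  (∀ (n : ℕ) (s t : Fin n → A), Rel = ∑ i, s i ⊗ₜ[k] t i →
    TensorProduct.map α Δ Rel = ∑ i, ∑ j, μ (s i) (s j) ⊗ₜ[k] (α (t j) ⊗ₜ[k] α (t i))) ∧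
  (∀ (x : A) (m n : ℕ) (x1 x2 : Fin m → A) (s t : Fin n → A),
    Δ x = ∑ i, x1 i ⊗ₜ[k] x2 i → Rel = ∑ i, s i ⊗ₜ[k] t i →
    ∑ i, ∑ j, μ (x2 i) (s j) ⊗ₜ[k] μ (x1 i) (t j)
      = ∑ i, ∑ j, μ (s j) (x1 i) ⊗ₜ[k] μ (t j) (x2 i))

/-- The convolution-type product on the dual induced by a comultiplication:
`⟨Δ*(φ ⊗ ψ), x⟩ = Σ φ(x₁) ψ(x₂)`. -/
noncomputable def deltaStar (k : Type*) {A : Type*} [CommRing k] [AddCommGroup A] [Module k A]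
    (Δ : A →ₗ[k] A ⊗[k] A) (φ ψ : Module.Dual k A) : Module.Dual k A :=
  TensorProduct.lift ((LinearMap.mul k k).compl₁₂ φ ψ) ∘ₗ Δ

/-- The bilinear version of `deltaStar`, `Δ* : A* →ₗ A* →ₗ A*`. -/
noncomputable def deltaStarBil (k : Type*) {A : Type*} [CommRing k] [AddCommGroup A] [Module k A]
    (Δ : A →ₗ[k] A ⊗[k] A) :
    Module.Dual k A →ₗ[k] Module.Dual k A →ₗ[k] Module.Dual k A :=
  TensorProduct.curry (Δ.dualMap ∘ₗ TensorProduct.dualDistrib k A A)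

/-- The dual comultiplication `μ* : A* → A* ⊗ A*` of a multiplication `μ` on a
finite free module, determined by `⟨μ*(φ), x ⊗ y⟩ = φ(xy)`. -/
noncomputable def mulStar (k : Type*) {A : Type*} [CommRing k] [AddCommGroup A] [Module k A]
    [Module.Finite k A] [Module.Free k A] (μ : A →ₗ[k] A →ₗ[k] A) :
    Module.Dual k A →ₗ[k] Module.Dual k A ⊗[k] Module.Dual k A :=
  (TensorProduct.dualDistribEquiv k A A).symm.toLinearMap ∘ₗ (TensorProduct.lift μ).dualMap

/-- The bilinear form `R̂` on the dual induced by an element `Rel = Σ sᵢ ⊗ tᵢ ∈ A ⊗ A`: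
`R̂(φ ⊗ ψ) = Σ φ(sᵢ) ψ(tᵢ)`. -/
noncomputable def rhat (k : Type*) {A : Type*} [CommRing k] [AddCommGroup A] [Module k A]
    (Rel : A ⊗[k] A) : Module.Dual k A →ₗ[k] Module.Dual k A →ₗ[k] k :=
  TensorProduct.curry (LinearMap.applyₗ (R := k) Rel ∘ₗ TensorProduct.dualDistrib k A A)

/-- A comodule `(M, α_M, ρ)` over a Hom-coassociative coalgebra `(A, Δ, α)`:
Hom-coassociativity and comultiplicativity of the structure map. -/
def IsComodule (k : Type*) {A M : Type*} [CommRing k] [AddCommGroup A] [Module k A]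
    [AddCommGroup M] [Module k M] (Δ : A →ₗ[k] A ⊗[k] A) (α : A →ₗ[k] A)
    (αM : M →ₗ[k] M) (ρ : M →ₗ[k] A ⊗[k] M) : Prop :=
  ((TensorProduct.assoc k A A M).toLinearMap ∘ₗ TensorProduct.map Δ αM ∘ₗ ρ
      = TensorProduct.map α ρ ∘ₗ ρ) ∧
  (TensorProduct.map α αM ∘ₗ ρ = ρ ∘ₗ αM)

/-- The map `B_{V,W} : V ⊗ W → W ⊗ V`, `B_{V,W}(v ⊗ w) = Σ R(w_A ⊗ v_A) w_W ⊗ v_V`,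
induced by comodule structure maps `ρ_V`, `ρ_W` and a bilinear form `R`. -/
noncomputable def Bmap (k : Type*) {A V W : Type*} [CommRing k] [AddCommGroup A] [Module k A]
    [AddCommGroup V] [Module k V] [AddCommGroup W] [Module k W]
    (R : A →ₗ[k] A →ₗ[k] k) (ρV : V →ₗ[k] A ⊗[k] V) (ρW : W →ₗ[k] A ⊗[k] W) :
    V ⊗[k] W →ₗ[k] W ⊗[k] V :=
  (TensorProduct.lid k (W ⊗[k] V)).toLinearMap
    ∘ₗ TensorProduct.map (TensorProduct.lift R) LinearMap.id
    ∘ₗ (TensorProduct.tensorTensorTensorComm k A W A V).toLinearMap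
    ∘ₗ TensorProduct.map ρW ρV
    ∘ₗ (TensorProduct.comm k V W).toLinearMap

/-- `B` is a solution of the Hom-Yang-Baxter equation for `(V, αV)`. -/
def IsHYBESolution (k : Type*) {V : Type*} [CommRing k] [AddCommGroup V] [Module k V]
    (αV : V →ₗ[k] V) (B : V ⊗[k] V →ₗ[k] V ⊗[k] V) : Prop :=
  (B ∘ₗ TensorProduct.map αV αV = TensorProduct.map αV αV ∘ₗ B) ∧
  ((TensorProduct.assoc k V V V).symm.toLinearMap
      ∘ₗ TensorProduct.map αV B
      ∘ₗ (TensorProduct.assoc k V V V).toLinearMap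
      ∘ₗ TensorProduct.map B αV
      ∘ₗ (TensorProduct.assoc k V V V).symm.toLinearMap
      ∘ₗ TensorProduct.map αV B
      ∘ₗ (TensorProduct.assoc k V V V).toLinearMap
    = TensorProduct.map B αV
      ∘ₗ (TensorProduct.assoc k V V V).symm.toLinearMap
      ∘ₗ TensorProduct.map αV B
      ∘ₗ (TensorProduct.assoc k V V V).toLinearMap
      ∘ₗ TensorProduct.map B αV)

/-- A (classical, possibly non-unital non-counital) bialgebra. -/
def IsBialgebraNC (k : Type*) {H : Type*} [CommRing k] [AddCommGroup H] [Module k H]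
    (μ : H →ₗ[k] H →ₗ[k] H) (Δ : H →ₗ[k] H ⊗[k] H) : Prop :=
  (∀ x y z : H, μ (μ x y) z = μ x (μ y z)) ∧
  (TensorProduct.map LinearMap.id Δ ∘ₗ Δ =
    (TensorProduct.assoc k H H H).toLinearMap ∘ₗ TensorProduct.map Δ LinearMap.id ∘ₗ Δ) ∧
  (∀ (x y : H) (m n : ℕ) (x1 x2 : Fin m → H) (y1 y2 : Fin n → H),
    Δ x = ∑ i, x1 i ⊗ₜ[k] x2 i → Δ y = ∑ j, y1 j ⊗ₜ[k] y2 j →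
    Δ (μ x y) = ∑ i, ∑ j, μ (x1 i) (y1 j) ⊗ₜ[k] μ (x2 i) (y2 j))

/-! Because `α_V` is a comodule endomorphism, `B = Bmap k R ρ ρ` commutes with `α_V ⊗ α_V`, so the
Hom-Yang-Baxter equation for `(α_V ⊗ α_V) ∘ B` reduces to the ordinary braid relation for `B`.
That relation is the classical one for comodules over a cobraided bialgebra: `B` is natural in
comodule morphisms, satisfies the hexagon identity `B_{U⊗V,W} = (B_{U,W} ⊗ 1)(1 ⊗ B_{V,W})`
(axiom (ii) and coassociativity of the coaction), and is itself a comodule morphism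
`V ⊗ W → W ⊗ V` for the diagonal coactions (axiom (iii)). Naturality of `B_{-,V}` with respect
to `B_{V,V}`, with both sides expanded by the hexagon identity, is the braid relation. -/

theorem sum_sum_sum_sum_comm {ι κ M : Type*} [Fintype ι] [Fintype κ] [AddCommMonoid M]
    {σ : ι → Type*} {τ : κ → Type*} [∀ i, Fintype (σ i)] [∀ j, Fintype (τ j)]
    (f : ∀ i, σ i → ∀ j, τ j → M) :
    ∑ i, ∑ s, ∑ j, ∑ t, f i s j t = ∑ j, ∑ i, ∑ t, ∑ s, f i s j t := by
  simp_rw [Finset.sum_comm (γ := σ _), Finset.sum_comm (γ := ι)]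

theorem Commute.mul_mul_mul_eq {G : Type*} [Monoid G] {t x y : G} (hx : Commute t x)
    (hy : Commute t y) (z : G) : t * x * (t * y) * (t * z) = t * t * t * (x * y * z) := by
  simp only [mul_assoc, ← hx.left_comm, ← (hx.mul_right hy).left_comm]

theorem IsHYBESolution.map_comp {k V : Type*} [CommRing k] [AddCommGroup V] [Module k V]
    {αV : V →ₗ[k] V} {B : V ⊗[k] V →ₗ[k] V ⊗[k] V}
    (hB : IsHYBESolution k LinearMap.id B) (hα : B ∘ₗ map αV αV = map αV αV ∘ₗ B) :
    IsHYBESolution k αV (map αV αV ∘ₗ B) := by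
  let T : Module.End k ((V ⊗[k] V) ⊗[k] V) := map (map αV αV) αV
  let B₁₂ : Module.End k ((V ⊗[k] V) ⊗[k] V) := map B LinearMap.id
  let B₂₃ : Module.End k ((V ⊗[k] V) ⊗[k] V) := (TensorProduct.assoc k V V V).symm.toLinearMap
    ∘ₗ map LinearMap.id B ∘ₗ (TensorProduct.assoc k V V V).toLinearMap
  have h₁₂ : map (map αV αV ∘ₗ B) αV = T * B₁₂ := by
    rw [Module.End.mul_eq_comp, ← TensorProduct.map_comp, LinearMap.comp_id]
  have h₂₃ : (TensorProduct.assoc k V V V).symm.toLinearMap ∘ₗ map αV (map αV αV ∘ₗ B)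
      ∘ₗ (TensorProduct.assoc k V V V).toLinearMap = T * B₂₃ := by
    refine TensorProduct.ext_threefold fun x y z => ?_
    simp only [T, B₂₃, LinearMap.comp_apply, Module.End.mul_apply, LinearEquiv.coe_coe,
      assoc_tmul, map_tmul, LinearMap.id_apply]
    induction B (y ⊗ₜ z) using TensorProduct.induction_on <;> simp_all [tmul_add]
  have c₁₂ : Commute T B₁₂ := by
    simp only [Commute, SemiconjBy, Module.End.mul_eq_comp, T, B₁₂, ← TensorProduct.map_comp, hα,
      LinearMap.comp_id, LinearMap.id_comp]
  have c₂₃ : Commute T B₂₃ := by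
    refine TensorProduct.ext_threefold fun x y z => ?_
    have hyz := LinearMap.congr_fun hα (y ⊗ₜ z)
    simp only [T, B₂₃, LinearMap.comp_apply, Module.End.mul_apply, LinearEquiv.coe_coe,
      assoc_tmul, map_tmul, LinearMap.id_apply] at hyz ⊢
    rw [hyz]
    induction B (y ⊗ₜ z) using TensorProduct.induction_on <;> simp_all [tmul_add]
  have hybe : B₂₃ * B₁₂ * B₂₃ = B₁₂ * B₂₃ * B₁₂ := by
    simpa only [B₁₂, B₂₃, Module.End.mul_eq_comp, LinearMap.comp_assoc] using hB.2
  refine ⟨by rw [LinearMap.comp_assoc, hα, ← LinearMap.comp_assoc], ?_⟩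
  calc _ = T * B₂₃ * (T * B₁₂) * (T * B₂₃) := by
        simp only [← h₁₂, ← h₂₃, Module.End.mul_eq_comp, LinearMap.comp_assoc]
    _ = T * B₁₂ * (T * B₂₃) * (T * B₁₂) := by
        rw [c₂₃.mul_mul_mul_eq c₁₂, c₁₂.mul_mul_mul_eq c₂₃, hybe]
    _ = _ := by
        simp only [← h₁₂, ← h₂₃, Module.End.mul_eq_comp, LinearMap.comp_assoc]

section Comodule

variable {k A : Type*} [CommRing k] [AddCommGroup A] [Module k A]
  {U V W V' W' : Type*} [AddCommGroup U] [Module k U] [AddCommGroup V] [Module k V]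
  [AddCommGroup W] [Module k W] [AddCommGroup V'] [Module k V'] [AddCommGroup W'] [Module k W']
  {ι κ : Type*} [Fintype ι] [Fintype κ]

def IsCoassocCoaction (Δ : A →ₗ[k] A ⊗[k] A) (ρ : V →ₗ[k] A ⊗[k] V) : Prop :=
  (TensorProduct.assoc k A A V).toLinearMap ∘ₗ map Δ LinearMap.id ∘ₗ ρ = map LinearMap.id ρ ∘ₗ ρ

def IsComoduleHom (ρV : V →ₗ[k] A ⊗[k] V) (ρW : W →ₗ[k] A ⊗[k] W) (f : V →ₗ[k] W) : Prop :=
  map LinearMap.id f ∘ₗ ρV = ρW ∘ₗ f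

noncomputable def tensorCoaction (μ : A →ₗ[k] A →ₗ[k] A) (ρV : V →ₗ[k] A ⊗[k] V)
    (ρW : W →ₗ[k] A ⊗[k] W) : V ⊗[k] W →ₗ[k] A ⊗[k] (V ⊗[k] W) :=
  map (lift μ) LinearMap.id ∘ₗ (tensorTensorTensorComm k A V A W).toLinearMap ∘ₗ map ρV ρW

noncomputable def braidingCore (R : A →ₗ[k] A →ₗ[k] k) :
    (A ⊗[k] W) ⊗[k] (A ⊗[k] V) →ₗ[k] W ⊗[k] V :=
  (TensorProduct.lid k (W ⊗[k] V)).toLinearMap ∘ₗ map (lift R) LinearMap.id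
    ∘ₗ (tensorTensorTensorComm k A W A V).toLinearMap

theorem Bmap_tmul (R : A →ₗ[k] A →ₗ[k] k) (ρV : V →ₗ[k] A ⊗[k] V) (ρW : W →ₗ[k] A ⊗[k] W)
    (v : V) (w : W) : Bmap k R ρV ρW (v ⊗ₜ w) = braidingCore R (ρW w ⊗ₜ ρV v) := rfl

@[simp] theorem braidingCore_tmul (R : A →ₗ[k] A →ₗ[k] k) (a b : A) (w : W) (v : V) :
    braidingCore R ((a ⊗ₜ w) ⊗ₜ (b ⊗ₜ v)) = R a b • (w ⊗ₜ v) := by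
  simp [braidingCore]

theorem Bmap_tmul_of_eq (R : A →ₗ[k] A →ₗ[k] k) {ρV : V →ₗ[k] A ⊗[k] V}
    {ρW : W →ₗ[k] A ⊗[k] W} {v : V} {w : W} {a : ι → A} {v' : ι → V} {b : κ → A} {w' : κ → W}
    (hv : ρV v = ∑ i, a i ⊗ₜ v' i) (hw : ρW w = ∑ j, b j ⊗ₜ w' j) :
    Bmap k R ρV ρW (v ⊗ₜ w) = ∑ j, ∑ i, R (b j) (a i) • (w' j ⊗ₜ v' i) := by
  simp only [Bmap_tmul, hv, hw, tmul_sum, sum_tmul, map_sum, braidingCore_tmul]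
  exact Finset.sum_comm

theorem tensorCoaction_tmul_of_eq (μ : A →ₗ[k] A →ₗ[k] A) {ρV : V →ₗ[k] A ⊗[k] V}
    {ρW : W →ₗ[k] A ⊗[k] W} {v : V} {w : W} {a : ι → A} {v' : ι → V} {b : κ → A} {w' : κ → W}
    (hv : ρV v = ∑ i, a i ⊗ₜ v' i) (hw : ρW w = ∑ j, b j ⊗ₜ w' j) :
    tensorCoaction μ ρV ρW (v ⊗ₜ w) = ∑ p : ι × κ, μ (a p.1) (b p.2) ⊗ₜ (v' p.1 ⊗ₜ w' p.2) := by
  simp only [tensorCoaction, LinearMap.coe_comp, LinearEquiv.coe_coe, Function.comp_apply,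
    map_tmul, hv, hw, tmul_sum, sum_tmul, map_sum, tensorTensorTensorComm_tmul, lift.tmul,
    LinearMap.id_coe, id_eq, Fintype.sum_prod_type]
  exact Finset.sum_comm

theorem IsComoduleHom.apply_eq_sum {ρV : V →ₗ[k] A ⊗[k] V} {ρW : W →ₗ[k] A ⊗[k] W}
    {f : V →ₗ[k] W} (hf : IsComoduleHom ρV ρW f) {v : V} {a : ι → A} {v' : ι → V}
    (hv : ρV v = ∑ i, a i ⊗ₜ v' i) : ρW (f v) = ∑ i, a i ⊗ₜ f (v' i) := by
  rw [← LinearMap.comp_apply, ← hf, LinearMap.comp_apply, hv]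
  simp

theorem IsCoassocCoaction.sum_tmul_coaction {Δ : A →ₗ[k] A ⊗[k] A} {ρ : V →ₗ[k] A ⊗[k] V}
    (hρ : IsCoassocCoaction Δ ρ) {v : V} {c : ι → A} {v' : ι → V} (hv : ρ v = ∑ l, c l ⊗ₜ v' l)
    {κ : ι → Type*} [∀ l, Fintype (κ l)] {c₁ c₂ : ∀ l, κ l → A}
    (hc : ∀ l, Δ (c l) = ∑ s, c₁ l s ⊗ₜ c₂ l s) :
    ∑ l, c l ⊗ₜ[k] ρ (v' l) = ∑ l, ∑ s, c₁ l s ⊗ₜ[k] (c₂ l s ⊗ₜ[k] v' l) := by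
  have h := LinearMap.congr_fun hρ v
  simp only [LinearMap.comp_apply, LinearEquiv.coe_coe, hv, map_sum, map_tmul, hc, sum_tmul,
    assoc_tmul, LinearMap.id_apply] at h
  exact h.symm

theorem Bmap_comp_map (R : A →ₗ[k] A →ₗ[k] k) {ρV : V →ₗ[k] A ⊗[k] V} {ρW : W →ₗ[k] A ⊗[k] W}
    {ρV' : V' →ₗ[k] A ⊗[k] V'} {ρW' : W' →ₗ[k] A ⊗[k] W'} {f : V →ₗ[k] V'} {g : W →ₗ[k] W'}
    (hf : IsComoduleHom ρV ρV' f) (hg : IsComoduleHom ρW ρW' g) :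
    Bmap k R ρV' ρW' ∘ₗ map f g = map g f ∘ₗ Bmap k R ρV ρW := by
  ext v w
  obtain ⟨_, a, v', hv⟩ := exists_sum_tmul_eq (ρV v)
  obtain ⟨_, b, w', hw⟩ := exists_sum_tmul_eq (ρW w)
  simp [Bmap_tmul_of_eq R hv hw, Bmap_tmul_of_eq R (hf.apply_eq_sum hv) (hg.apply_eq_sum hw)]

theorem Bmap_tensorCoaction_left (μ : A →ₗ[k] A →ₗ[k] A) (Δ : A →ₗ[k] A ⊗[k] A)
    (R : A →ₗ[k] A →ₗ[k] k)
    (hR_mul : ∀ (x y z : A) (n : ℕ) (x1 x2 : Fin n → A), Δ x = ∑ i, x1 i ⊗ₜ[k] x2 i →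
      R x (μ y z) = ∑ i, R (x1 i) z * R (x2 i) y)
    (ρU : U →ₗ[k] A ⊗[k] U) (ρV : V →ₗ[k] A ⊗[k] V) {ρW : W →ₗ[k] A ⊗[k] W}
    (hρW : IsCoassocCoaction Δ ρW) :
    Bmap k R (tensorCoaction μ ρU ρV) ρW =
      (TensorProduct.assoc k W U V).toLinearMap ∘ₗ map (Bmap k R ρU ρW) LinearMap.id
        ∘ₗ (TensorProduct.assoc k U W V).symm.toLinearMap ∘ₗ map LinearMap.id (Bmap k R ρV ρW)
        ∘ₗ (TensorProduct.assoc k U V W).toLinearMap := by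
  refine TensorProduct.ext_threefold fun u v w => ?_
  obtain ⟨_, a, u', hu⟩ := exists_sum_tmul_eq (ρU u)
  obtain ⟨_, b, v', hv⟩ := exists_sum_tmul_eq (ρV v)
  obtain ⟨_, c, w', hw⟩ := exists_sum_tmul_eq (ρW w)
  choose _ c₁ c₂ hc using fun l => exists_sum_tmul_eq (Δ (c l))
  -- `Φ (c ⊗ ρ w') = Σⱼ R(c, bⱼ) • (B(u ⊗ w') ⊗ v'ⱼ)`
  let Φ : A ⊗[k] (A ⊗[k] W) →ₗ[k] W ⊗[k] (U ⊗[k] V) := lift <| ∑ j, (R.flip (b j)).smulRight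
    ((TensorProduct.assoc k W U V).toLinearMap ∘ₗ (mk k (W ⊗[k] U) V).flip (v' j)
      ∘ₗ braidingCore R ∘ₗ (mk k (A ⊗[k] W) (A ⊗[k] U)).flip (ρU u))
  calc _ = Φ (∑ l, ∑ s, c₁ l s ⊗ₜ (c₂ l s ⊗ₜ w' l)) := by
        rw [Bmap_tmul_of_eq R (tensorCoaction_tmul_of_eq μ hu hv) hw]
        simp only [Φ, map_sum, lift.tmul, LinearMap.smul_apply, LinearMap.sum_apply,
          LinearMap.smulRight_apply, LinearMap.flip_apply, LinearMap.comp_apply,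
          LinearEquiv.coe_coe, mk_apply, hu, braidingCore_tmul, smul_tmul', assoc_tmul,
          hR_mul _ _ _ _ _ _ (hc _), Finset.sum_smul, Fintype.sum_prod_type, Finset.smul_sum,
          mul_smul]
        refine Finset.sum_congr rfl fun l _ => ?_
        rw [Finset.sum_comm_cycle]
        exact Finset.sum_congr rfl fun s _ => Finset.sum_comm
    _ = Φ (∑ l, c l ⊗ₜ ρW (w' l)) := by rw [hρW.sum_tmul_coaction hw hc]
    _ = _ := by simp [Φ, Bmap_tmul_of_eq R hv hw, Bmap_tmul, tmul_sum]

theorem isComoduleHom_Bmap (μ : A →ₗ[k] A →ₗ[k] A) (Δ : A →ₗ[k] A ⊗[k] A)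
    (R : A →ₗ[k] A →ₗ[k] k)
    (hR_comm : ∀ (x y : A) (m n : ℕ) (x1 x2 : Fin m → A) (y1 y2 : Fin n → A),
      Δ x = ∑ i, x1 i ⊗ₜ[k] x2 i → Δ y = ∑ j, y1 j ⊗ₜ[k] y2 j →
      ∑ i, ∑ j, R (x2 i) (y2 j) • μ (y1 j) (x1 i) = ∑ i, ∑ j, R (x1 i) (y1 j) • μ (x2 i) (y2 j))
    {ρV : V →ₗ[k] A ⊗[k] V} {ρW : W →ₗ[k] A ⊗[k] W}
    (hρV : IsCoassocCoaction Δ ρV) (hρW : IsCoassocCoaction Δ ρW) :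
    IsComoduleHom (tensorCoaction μ ρV ρW) (tensorCoaction μ ρW ρV) (Bmap k R ρV ρW) := by
  refine TensorProduct.ext' fun v w => ?_
  obtain ⟨_, a, v', hv⟩ := exists_sum_tmul_eq (ρV v)
  obtain ⟨_, b, w', hw⟩ := exists_sum_tmul_eq (ρW w)
  choose _ a₁ a₂ ha using fun i => exists_sum_tmul_eq (Δ (a i))
  choose _ b₁ b₂ hb using fun j => exists_sum_tmul_eq (Δ (b j))
  -- both sides are linear in `Σ b ⊗ ρ w' ⊗ Σ a ⊗ ρ v'`, where coassociativity applies
  let Θ₁ : (A ⊗[k] (A ⊗[k] W)) ⊗[k] (A ⊗[k] (A ⊗[k] V)) →ₗ[k] A ⊗[k] (W ⊗[k] V) :=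
    map (lift μ.flip) (braidingCore R)
      ∘ₗ (tensorTensorTensorComm k A (A ⊗[k] W) A (A ⊗[k] V)).toLinearMap
  let Θ₂ : (A ⊗[k] (A ⊗[k] W)) ⊗[k] (A ⊗[k] (A ⊗[k] V)) →ₗ[k] A ⊗[k] (W ⊗[k] V) :=
    (TensorProduct.lid k _).toLinearMap
      ∘ₗ map (lift R) (map (lift μ) LinearMap.id ∘ₗ (tensorTensorTensorComm k A W A V).toLinearMap)
      ∘ₗ (tensorTensorTensorComm k A (A ⊗[k] W) A (A ⊗[k] V)).toLinearMap
  have hcoass := congrArg₂ (· ⊗ₜ[k] ·) (hρW.sum_tmul_coaction hw hb)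
    (hρV.sum_tmul_coaction hv ha)
  calc _ = Θ₁ ((∑ j, b j ⊗ₜ[k] ρW (w' j)) ⊗ₜ (∑ i, a i ⊗ₜ[k] ρV (v' i))) := by
        simp [Θ₁, tensorCoaction_tmul_of_eq μ hv hw, Bmap_tmul, sum_tmul, tmul_sum,
          Fintype.sum_prod_type]
    _ = ∑ j, ∑ i, (∑ t, ∑ s, R (b₂ j t) (a₂ i s) • μ (a₁ i s) (b₁ j t)) ⊗ₜ (w' j ⊗ₜ v' i) := by
        rw [hcoass]
        simp only [tmul_sum, sum_tmul, map_sum, LinearMap.coe_comp, LinearEquiv.coe_coe,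
          Function.comp_apply, tensorTensorTensorComm_tmul, map_tmul, lift.tmul,
          LinearMap.flip_apply, braidingCore_tmul, tmul_smul, ← smul_tmul', Θ₁]
        exact sum_sum_sum_sum_comm _
    _ = ∑ j, ∑ i, (∑ t, ∑ s, R (b₁ j t) (a₁ i s) • μ (b₂ j t) (a₂ i s)) ⊗ₜ (w' j ⊗ₜ v' i) := by
        simp only [hR_comm _ _ _ _ _ _ _ _ (hb _) (ha _)]
    _ = Θ₂ ((∑ j, b j ⊗ₜ[k] ρW (w' j)) ⊗ₜ (∑ i, a i ⊗ₜ[k] ρV (v' i))) := by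
        rw [hcoass]
        simp only [sum_tmul, ← smul_tmul', tmul_sum, map_sum, LinearMap.coe_comp,
          LinearEquiv.coe_coe, Function.comp_apply, tensorTensorTensorComm_tmul, map_tmul,
          lift.tmul, LinearMap.id_coe, id_eq, lid_tmul, Θ₂]
        exact (sum_sum_sum_sum_comm _).symm
    _ = _ := by
        simp only [tmul_sum, sum_tmul, map_sum, LinearMap.coe_comp, LinearEquiv.coe_coe,
          Function.comp_apply, tensorTensorTensorComm_tmul, map_tmul, lift.tmul, lid_tmul,
          tensorCoaction, Bmap_tmul_of_eq R hv hw, map_smul, Θ₂]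
        exact Finset.sum_comm

theorem isHYBESolution_id_Bmap (μ : A →ₗ[k] A →ₗ[k] A) (Δ : A →ₗ[k] A ⊗[k] A)
    (R : A →ₗ[k] A →ₗ[k] k)
    (hR_mul : ∀ (x y z : A) (n : ℕ) (x1 x2 : Fin n → A), Δ x = ∑ i, x1 i ⊗ₜ[k] x2 i →
      R x (μ y z) = ∑ i, R (x1 i) z * R (x2 i) y)
    (hR_comm : ∀ (x y : A) (m n : ℕ) (x1 x2 : Fin m → A) (y1 y2 : Fin n → A),
      Δ x = ∑ i, x1 i ⊗ₜ[k] x2 i → Δ y = ∑ j, y1 j ⊗ₜ[k] y2 j →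
      ∑ i, ∑ j, R (x2 i) (y2 j) • μ (y1 j) (x1 i) = ∑ i, ∑ j, R (x1 i) (y1 j) • μ (x2 i) (y2 j))
    {ρ : V →ₗ[k] A ⊗[k] V} (hρ : IsCoassocCoaction Δ ρ) :
    IsHYBESolution k LinearMap.id (Bmap k R ρ ρ) := by
  have hid : IsComoduleHom ρ ρ LinearMap.id := by simp [IsComoduleHom]
  have hnat := Bmap_comp_map R (isComoduleHom_Bmap μ Δ R hR_comm hρ hρ) hid
  rw [Bmap_tensorCoaction_left μ Δ R hR_mul ρ ρ hρ] at hnat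
  refine ⟨by simp, ?_⟩
  have h := congrArg ((TensorProduct.assoc k V V V).symm.toLinearMap ∘ₗ ·) hnat
  simp only [← LinearMap.comp_assoc, LinearEquiv.symm_comp, LinearMap.id_comp] at h
  simpa only [LinearMap.comp_assoc] using h.symm

end Comodule

/-- (Corollary 7.7: a classical comodule over a cobraided bialgebra
together with a comodule endomorphism `α_V` yields a solution
`B_α(v ⊗ w) = Σ R(w_A ⊗ v_A) α_V(w_V) ⊗ α_V(v_V)` of the HYBE for `(V, α_V)`. -/
theorem comodule_morphism_gives_HYBE_solution
    (k : Type*) {A V : Type*} [CommRing k] [AddCommGroup A] [Module k A]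
    [AddCommGroup V] [Module k V]
    (μ : A →ₗ[k] A →ₗ[k] A) (Δ : A →ₗ[k] A ⊗[k] A) (R : A →ₗ[k] A →ₗ[k] k)
    (h : IsCobraidedBialgebra k μ Δ R)
    (ρ : V →ₗ[k] A ⊗[k] V)
    (hcoass : (TensorProduct.assoc k A A V).toLinearMap
        ∘ₗ TensorProduct.map Δ LinearMap.id ∘ₗ ρ
      = TensorProduct.map LinearMap.id ρ ∘ₗ ρ)
    (αV : V →ₗ[k] V)
    (hαV : TensorProduct.map LinearMap.id αV ∘ₗ ρ = ρ ∘ₗ αV) :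
    IsHYBESolution k αV (TensorProduct.map αV αV ∘ₗ Bmap k R ρ ρ) := by
  obtain ⟨-, -, -, -, hR_mul, hR_comm⟩ := h
  have hybe : IsHYBESolution k LinearMap.id (Bmap k R ρ ρ) :=
    isHYBESolution_id_Bmap μ Δ R hR_mul hR_comm hcoass
  exact hybe.map_comp (Bmap_comp_map R hαV hαV)
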